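/- arXiv:math/0405246 — 4 statements merged into one kernel-verified Lean document; each statement's English description precedes it below -/
import Mathlib

section
/- A finite N×N para-tridiagonal matrix C (meaning c_{i,j} = 0 when i - j ≥ 2 except possibly c_{2k+2,2k}, and when j - i ≥ 2 except possibly c_{2k-1,2k+1}, indices as in the block structure) is unitary if and only if it can be written as a product C_o · C_e^T, where C_o is a direct sum of 2×2 unitary blocks Θ(a_{2n-1}, b_{2n-1}) and C_e is the direct sum of a 1×1 identity and 2×2 unitary blocks Θ(a_{2n}, b_{2n}), with |a_n|² + |b_n|² = 1 for 1 ≤ n ≤ N-1 and |a_N| = 1. -/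
open Complex Matrix

/-- `C` is para-tridiagonal (0-indexed): five-diagonal with `C i j = 0` for
`i - j ≥ 2` except possibly `(i,j) = (2k+2, 2k)` (0-indexed: `i = j+2`, `j` odd),
and for `j - i ≥ 2` except possibly `(i,j) = (2k-1, 2k+1)` (0-indexed: `j = i+2`, `i` even). -/
def ParaTridiagonal {N : ℕ} (C : Matrix (Fin N) (Fin N) ℂ) : Prop :=
  ∀ i j : Fin N,
    (((j : ℕ) + 2 ≤ i ∧ ¬((i : ℕ) = j + 2 ∧ Odd (j : ℕ))) ∨
     ((i : ℕ) + 2 ≤ j ∧ ¬((j : ℕ) = i + 2 ∧ Even (i : ℕ)))) → C i j = 0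

/-- `C_o = Θ(a₁,b₁) ⊕ Θ(a₃,b₃) ⊕ ⋯` (with a final `1×1` block `(-a_N)` when `N` is odd),
where `Θ(a,b) = [[-a, conj b],[b, conj a]]`; 0-indexed rows/columns, 1-indexed parameters. -/
noncomputable def coMat (a b : ℕ → ℂ) (N : ℕ) : Matrix (Fin N) (Fin N) ℂ := fun i j =>
  if (i : ℕ) = j then (if Even (i : ℕ) then -a (i + 1) else (starRingEnd ℂ) (a i))
  else if (j : ℕ) = i + 1 ∧ Even (i : ℕ) then (starRingEnd ℂ) (b ((i : ℕ) + 1))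
  else if (i : ℕ) = j + 1 ∧ Even (j : ℕ) then b ((j : ℕ) + 1)
  else 0

/-- `C_e = I₁ ⊕ Θ(a₂,b₂) ⊕ Θ(a₄,b₄) ⊕ ⋯` (with a final `1×1` block `(-a_N)` when `N` is even). -/
noncomputable def ceMat (a b : ℕ → ℂ) (N : ℕ) : Matrix (Fin N) (Fin N) ℂ := fun i j =>
  if (i : ℕ) = j then
    (if (i : ℕ) = 0 then 1 else if Odd (i : ℕ) then -a (i + 1) else (starRingEnd ℂ) (a i))
  else if (j : ℕ) = i + 1 ∧ Odd (i : ℕ) then (starRingEnd ℂ) (b ((i : ℕ) + 1))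
  else if (i : ℕ) = j + 1 ∧ Odd (j : ℕ) then b ((j : ℕ) + 1)
  else 0

/-- sum with at most two nonzero terms -/
lemma sum_two {M : Type*} [AddCommMonoid M] {N : ℕ} (f : Fin N → M) (p q : Fin N) (hpq : p ≠ q)
    (h : ∀ k, k ≠ p → k ≠ q → f k = 0) : ∑ k, f k = f p + f q := by
  rw [show (∑ k, f k) = ∑ k ∈ ({p, q} : Finset (Fin N)), f k from
    (Finset.sum_subset (Finset.subset_univ _) (fun x _ hx => by
      simp only [Finset.mem_insert, Finset.mem_singleton] at hx
      push_neg at hx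
      exact h x hx.1 hx.2)).symm]
  exact Finset.sum_pair hpq

lemma sum_one {M : Type*} [AddCommMonoid M] {N : ℕ} (f : Fin N → M) (p : Fin N)
    (h : ∀ k, k ≠ p → f k = 0) : ∑ k, f k = f p :=
  Finset.sum_eq_single_of_mem p (Finset.mem_univ p) (fun k _ hk => h k hk)

noncomputable def op1 {N : ℕ} (M : Matrix (Fin N) (Fin N) ℂ) :
    Matrix (Fin (N+1)) (Fin (N+1)) ℂ :=
  Matrix.of fun i j =>
    if hi : (i : ℕ) = 0 then (if (j : ℕ) = 0 then 1 else 0)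
    else if hj : (j : ℕ) = 0 then 0
    else M ⟨(i:ℕ) - 1, by have := i.2; omega⟩ ⟨(j:ℕ) - 1, by have := j.2; omega⟩

noncomputable def th2 (x y : ℂ) (N : ℕ) : Matrix (Fin N) (Fin N) ℂ :=
  Matrix.of fun i j =>
    if (i : ℕ) = 0 ∧ (j : ℕ) = 0 then -x
    else if (i : ℕ) = 0 ∧ (j : ℕ) = 1 then (starRingEnd ℂ) y
    else if (i : ℕ) = 1 ∧ (j : ℕ) = 0 then y
    else if (i : ℕ) = 1 ∧ (j : ℕ) = 1 then (starRingEnd ℂ) x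
    else if (i : ℕ) = (j : ℕ) then 1 else 0

@[simp] lemma op1_zero_zero {N : ℕ} (M : Matrix (Fin N) (Fin N) ℂ) :
    op1 M 0 0 = 1 := by simp [op1]

@[simp] lemma op1_zero_succ {N : ℕ} (M : Matrix (Fin N) (Fin N) ℂ) (j : Fin N) :
    op1 M 0 j.succ = 0 := by simp [op1]

@[simp] lemma op1_succ_zero {N : ℕ} (M : Matrix (Fin N) (Fin N) ℂ) (i : Fin N) :
    op1 M i.succ 0 = 0 := by simp [op1]

@[simp] lemma op1_succ_succ {N : ℕ} (M : Matrix (Fin N) (Fin N) ℂ) (i j : Fin N) :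
    op1 M i.succ j.succ = M i j := by
  simp only [op1, Matrix.of_apply, Fin.val_succ, Nat.add_sub_cancel]
  rw [dif_neg (by omega), dif_neg (by omega)]

lemma op1_mul {N : ℕ} (M M' : Matrix (Fin N) (Fin N) ℂ) :
    op1 M * op1 M' = op1 (M * M') := by
  ext i j
  rw [Matrix.mul_apply]
  induction i using Fin.cases with
  | zero =>
    induction j using Fin.cases with
    | zero => rw [Fin.sum_univ_succ]; simp
    | succ j => rw [Fin.sum_univ_succ]; simp
  | succ i =>
    induction j using Fin.cases with
    | zero => rw [Fin.sum_univ_succ]; simp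
    | succ j =>
      rw [Fin.sum_univ_succ]
      simp [Matrix.mul_apply]

lemma op1_conjTranspose {N : ℕ} (M : Matrix (Fin N) (Fin N) ℂ) :
    (op1 M)ᴴ = op1 Mᴴ := by
  ext i j
  induction i using Fin.cases with
  | zero => induction j using Fin.cases with
    | zero => simp
    | succ j => simp
  | succ i => induction j using Fin.cases with
    | zero => simp
    | succ j => simp

lemma op1_transpose {N : ℕ} (M : Matrix (Fin N) (Fin N) ℂ) :
    (op1 M)ᵀ = op1 Mᵀ := by
  ext i j
  induction i using Fin.cases with
  | zero => induction j using Fin.cases with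
    | zero => simp
    | succ j => simp
  | succ i => induction j using Fin.cases with
    | zero => simp
    | succ j => simp

lemma op1_one {N : ℕ} : op1 (1 : Matrix (Fin N) (Fin N) ℂ) = 1 := by
  ext i j
  induction i using Fin.cases with
  | zero => induction j using Fin.cases with
    | zero => simp
    | succ j => simp [Matrix.one_apply, (Fin.succ_ne_zero j).symm]
  | succ i => induction j using Fin.cases with
    | zero => simp [Matrix.one_apply, Fin.succ_ne_zero i]
    | succ j => simp [Matrix.one_apply, Fin.succ_inj]

lemma op1_inj {N : ℕ} {X Y : Matrix (Fin N) (Fin N) ℂ} (h : op1 X = op1 Y) : X = Y := by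
  ext i j
  have := congrFun (congrFun h i.succ) j.succ
  simpa using this

lemma op1_unitary_iff {N : ℕ} (M : Matrix (Fin N) (Fin N) ℂ) :
    op1 M ∈ Matrix.unitaryGroup (Fin (N+1)) ℂ ↔ M ∈ Matrix.unitaryGroup (Fin N) ℂ := by
  rw [Matrix.mem_unitaryGroup_iff, Matrix.mem_unitaryGroup_iff,
    Matrix.star_eq_conjTranspose, Matrix.star_eq_conjTranspose,
    op1_conjTranspose, op1_mul]
  constructor
  · intro h
    exact op1_inj (by rw [h, op1_one])
  · intro h; rw [h, op1_one]

lemma transpose_unitary {n : ℕ} {U : Matrix (Fin n) (Fin n) ℂ}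
    (h : U ∈ Matrix.unitaryGroup (Fin n) ℂ) : Uᵀ ∈ Matrix.unitaryGroup (Fin n) ℂ := by
  rw [Matrix.mem_unitaryGroup_iff'] at h
  rw [Matrix.mem_unitaryGroup_iff]
  rw [Matrix.star_eq_conjTranspose] at h ⊢
  have e : Uᵀᴴ = Uᴴᵀ := by
    ext i j; simp [Matrix.conjTranspose_apply, Matrix.transpose_apply]
  rw [e, ← Matrix.transpose_mul, h, Matrix.transpose_one]

lemma fin_eq_of_val {N : ℕ} {i : Fin N} {m : ℕ} (hm : m < N) (h : (i:ℕ) = m) :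
    i = ⟨m, hm⟩ := Fin.ext h

lemma th2_apply_ge {N : ℕ} (x y : ℂ) {i : Fin N} (k : Fin N) (hi : 2 ≤ (i:ℕ)) :
    th2 x y N i k = if (i:ℕ) = (k:ℕ) then 1 else 0 := by
  simp only [th2, Matrix.of_apply]
  rw [if_neg (by omega), if_neg (by omega), if_neg (by omega), if_neg (by omega)]

lemma th2_apply_col_ge {N : ℕ} (x y : ℂ) {i : Fin N} (k : Fin N) (hi : 2 ≤ (k:ℕ)) :
    th2 x y N i k = if (i:ℕ) = (k:ℕ) then 1 else 0 := by
  simp only [th2, Matrix.of_apply]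
  rw [if_neg (by omega), if_neg (by omega), if_neg (by omega), if_neg (by omega)]

lemma th2_mul_apply_ge {N : ℕ} (x y : ℂ) (Y : Matrix (Fin N) (Fin N) ℂ)
    {i : Fin N} (j : Fin N) (hi : 2 ≤ (i:ℕ)) :
    (th2 x y N * Y) i j = Y i j := by
  rw [Matrix.mul_apply]
  rw [sum_one _ i (fun k hk => by
    rw [th2_apply_ge x y k hi, if_neg (fun h => hk (Fin.ext h.symm)), zero_mul])]
  rw [th2_apply_ge x y i hi, if_pos rfl, one_mul]

lemma th2_mul_apply_lt {N : ℕ} (hN : 2 ≤ N) (x y : ℂ) (Y : Matrix (Fin N) (Fin N) ℂ)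
    {i : Fin N} (j : Fin N) (hi : (i:ℕ) < 2) :
    (th2 x y N * Y) i j =
      th2 x y N i ⟨0, by omega⟩ * Y ⟨0, by omega⟩ j
        + th2 x y N i ⟨1, by omega⟩ * Y ⟨1, by omega⟩ j := by
  rw [Matrix.mul_apply]
  exact sum_two _ ⟨0, by omega⟩ ⟨1, by omega⟩ (by simp [Fin.ext_iff])
    (fun k hk0 hk1 => by
      have h0 : (k:ℕ) ≠ 0 := fun h => hk0 (Fin.ext h)
      have h1 : (k:ℕ) ≠ 1 := fun h => hk1 (Fin.ext h)
      have : th2 x y N i k = 0 := by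
        simp only [th2, Matrix.of_apply]
        rw [if_neg (by omega), if_neg (by omega), if_neg (by omega), if_neg (by omega),
          if_neg (by omega)]
      rw [this, zero_mul])

lemma th2_conjTranspose {N : ℕ} (x y : ℂ) :
    (th2 x y N)ᴴ = th2 ((starRingEnd ℂ) x) y N := by
  ext i j
  simp only [Matrix.conjTranspose_apply, th2, Matrix.of_apply, star_def]
  split_ifs <;> first
    | (exfalso; omega)
    | simp

lemma abs_cond_to_c {x y : ℂ} (h : ‖x‖ ^ 2 + ‖y‖ ^ 2 = 1) :
    x * (starRingEnd ℂ) x + y * (starRingEnd ℂ) y = 1 := by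
  rw [Complex.mul_conj, Complex.mul_conj, ← Complex.ofReal_add]
  rw [← Complex.sq_norm, ← Complex.sq_norm, h, Complex.ofReal_one]

lemma th2_apply_00 {N : ℕ} (x y : ℂ) (hN : 0 < N) :
    th2 x y N ⟨0, hN⟩ ⟨0, hN⟩ = -x := by simp [th2]

lemma th2_unitary {N : ℕ} (hN : 2 ≤ N) {x y : ℂ}
    (h : ‖x‖ ^ 2 + ‖y‖ ^ 2 = 1) :
    th2 x y N ∈ Matrix.unitaryGroup (Fin N) ℂ := by
  have hC := abs_cond_to_c h
  rw [Matrix.mem_unitaryGroup_iff, Matrix.star_eq_conjTranspose, th2_conjTranspose]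
  ext i j
  by_cases hi : 2 ≤ (i:ℕ)
  · rw [th2_mul_apply_ge _ _ _ j hi, th2_apply_ge _ _ j hi, Matrix.one_apply]
    by_cases hij : i = j
    · rw [if_pos hij, if_pos (congrArg Fin.val hij)]
    · rw [if_neg hij, if_neg (fun hv => hij (Fin.ext hv))]
  · push_neg at hi
    rw [th2_mul_apply_lt hN _ _ _ j hi]
    by_cases hj : 2 ≤ (j:ℕ)
    · rw [th2_apply_col_ge _ _ _ hj, th2_apply_col_ge _ _ _ hj,
        if_neg (by simp; omega), if_neg (by simp; omega), Matrix.one_apply,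
        if_neg (fun hv => by have := congrArg Fin.val hv; omega)]
      ring
    · push_neg at hj
      have hi01 : (i:ℕ) = 0 ∨ (i:ℕ) = 1 := by omega
      have hj01 : (j:ℕ) = 0 ∨ (j:ℕ) = 1 := by omega
      rcases hi01 with hi0 | hi1 <;> rcases hj01 with hj0 | hj1
      · rw [fin_eq_of_val (by omega) hi0, fin_eq_of_val (by omega) hj0]
        simp only [th2, Matrix.of_apply, Matrix.one_apply]
        norm_num
        linear_combination hC
      · rw [fin_eq_of_val (by omega) hi0, fin_eq_of_val (by omega) hj1]
        simp only [th2, Matrix.of_apply, Matrix.one_apply]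
        norm_num [Fin.ext_iff]
        ring
      · rw [fin_eq_of_val (by omega) hi1, fin_eq_of_val (by omega) hj0]
        simp only [th2, Matrix.of_apply, Matrix.one_apply]
        norm_num [Fin.ext_iff]
        ring
      · rw [fin_eq_of_val (by omega) hi1, fin_eq_of_val (by omega) hj1]
        simp only [th2, Matrix.of_apply, Matrix.one_apply]
        norm_num [Fin.ext_iff]
        linear_combination hC

lemma th2_unitary_one {x y : ℂ} (h : ‖x‖ = 1) :
    th2 x y 1 ∈ Matrix.unitaryGroup (Fin 1) ℂ := by
  rw [Matrix.mem_unitaryGroup_iff, Matrix.star_eq_conjTranspose, th2_conjTranspose]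
  ext i j
  rw [Matrix.mul_apply, Fin.sum_univ_one]
  have hi : i = 0 := Subsingleton.elim _ _
  have hj : j = 0 := Subsingleton.elim _ _
  subst hi; subst hj
  simp only [th2, Matrix.of_apply, Matrix.one_apply]
  norm_num
  rw [Complex.mul_conj, ← Complex.sq_norm, h]
  norm_num

lemma keyE (a b : ℕ → ℂ) (N : ℕ) :
    ceMat a b (N+1) = op1 (coMat (fun n => a (n+1)) (fun n => b (n+1)) N) := by
  ext i j
  induction i using Fin.cases with
  | zero =>
    induction j using Fin.cases with
    | zero => simp [ceMat]
    | succ j =>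
      simp only [ceMat, op1, Matrix.of_apply, Fin.val_succ, Fin.val_zero, Nat.odd_iff]
      split_ifs <;> first | rfl | omega | tauto
  | succ i =>
    induction j using Fin.cases with
    | zero =>
      simp only [ceMat, op1, Matrix.of_apply, Fin.val_succ, Fin.val_zero, Nat.odd_iff]
      split_ifs <;> first | rfl | omega | tauto
    | succ j =>
      rw [op1_succ_succ]
      simp only [ceMat, coMat, Fin.val_succ, Nat.even_iff, Nat.odd_iff]
      split_ifs <;> first | rfl | omega | tauto

lemma op1_apply_zrow {N : ℕ} (M : Matrix (Fin N) (Fin N) ℂ) (i j : Fin (N+1))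
    (hi : (i:ℕ) = 0) : op1 M i j = if (j:ℕ) = 0 then 1 else 0 := by
  simp only [op1, Matrix.of_apply]; rw [dif_pos hi]

lemma op1_apply_czero {N : ℕ} (M : Matrix (Fin N) (Fin N) ℂ) (i j : Fin (N+1))
    (hi : (i:ℕ) ≠ 0) (hj : (j:ℕ) = 0) : op1 M i j = 0 := by
  simp only [op1, Matrix.of_apply]; rw [dif_neg hi, dif_pos hj]

lemma op1_apply_ne {N : ℕ} (M : Matrix (Fin N) (Fin N) ℂ) (i j : Fin (N+1))
    (hi : (i:ℕ) ≠ 0) (hj : (j:ℕ) ≠ 0) :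
    op1 M i j = M ⟨(i:ℕ)-1, by have := i.2; omega⟩ ⟨(j:ℕ)-1, by have := j.2; omega⟩ := by
  simp only [op1, Matrix.of_apply]; rw [dif_neg hi, dif_neg hj]

lemma keyO_tail (a b : ℕ → ℂ) (N : ℕ) (i j : Fin (N+1)) (hi : 2 ≤ (i:ℕ)) :
    coMat a b (N+1) i j = op1 (ceMat (fun n => a (n+1)) (fun n => b (n+1)) N) i j := by
  induction i using Fin.cases with
  | zero => simp at hi
  | succ i =>
    have hi' : 1 ≤ (i:ℕ) := by simpa using hi
    induction j using Fin.cases with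
    | zero =>
      rw [op1_succ_zero]
      simp only [coMat, Fin.val_succ, Fin.val_zero, Nat.even_iff]
      split_ifs <;> first | rfl | omega | tauto
    | succ j =>
      rw [op1_succ_succ]
      simp only [coMat, ceMat, Fin.val_succ, Nat.even_iff, Nat.odd_iff]
      split_ifs <;> first | rfl | omega | tauto

lemma ceMat_row0 {N : ℕ} (a b : ℕ → ℂ) (p q : Fin N) (hp : (p:ℕ) = 0) :
    ceMat a b N p q = if (q:ℕ) = 0 then 1 else 0 := by
  simp only [ceMat, Nat.odd_iff]
  split_ifs <;> first | rfl | omega | tauto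

set_option maxHeartbeats 1000000 in
lemma keyO (a b : ℕ → ℂ) (N : ℕ) :
    coMat a b (N+1) =
      th2 (a 1) (b 1) (N+1) * op1 (ceMat (fun n => a (n+1)) (fun n => b (n+1)) N) := by
  cases N with
  | zero =>
    ext i j
    have hi : i = 0 := Fin.fin_one_eq_zero i
    have hj : j = 0 := Fin.fin_one_eq_zero j
    subst hi; subst hj
    rw [Matrix.mul_apply, Fin.sum_univ_one]
    simp [coMat, th2, op1]
  | succ N' =>
    ext i j
    by_cases hi2 : 2 ≤ (i:ℕ)
    · rw [th2_mul_apply_ge _ _ _ j hi2]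
      exact keyO_tail a b (N'+1) i j hi2
    · push_neg at hi2
      rw [th2_mul_apply_lt (by omega) _ _ _ j hi2]
      rw [op1_apply_zrow _ _ _ (by simp)]
      have hi01 : (i:ℕ) = 0 ∨ (i:ℕ) = 1 := by omega
      by_cases hj0 : (j:ℕ) = 0
      · rw [if_pos hj0, op1_apply_czero _ _ _ (by simp) hj0]
        rcases hi01 with h|h <;> rw [fin_eq_of_val (by omega) h] <;>
          simp [coMat, th2, hj0, Nat.even_iff]
      · rw [if_neg hj0, op1_apply_ne _ _ _ (by simp) hj0]
        rw [ceMat_row0 _ _ _ _ (by simp)]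
        by_cases hj1 : (j:ℕ) = 1
        · rw [if_pos (by simp; omega)]
          rcases hi01 with h|h <;> rw [fin_eq_of_val (by omega) h] <;>
          · simp only [coMat, th2, Matrix.of_apply, Nat.even_iff, Nat.odd_iff]
            split_ifs <;> first | (exfalso; omega) | tauto | simp
        · rw [if_neg (by simp; omega)]
          rcases hi01 with h|h <;> rw [fin_eq_of_val (by omega) h] <;>
          · simp only [coMat, th2, Matrix.of_apply, Nat.even_iff, Nat.odd_iff]
            split_ifs <;> first | (exfalso; omega) | tauto | simp

def good (a b : ℕ → ℂ) (N : ℕ) : Prop :=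
  (∀ n, 1 ≤ n → n ≤ N - 1 → ‖a n‖ ^ 2 + ‖b n‖ ^ 2 = 1) ∧
  (1 ≤ N → ‖a N‖ = 1)

lemma good_shift {a b : ℕ → ℂ} {N : ℕ} (h : good a b (N+1)) :
    good (fun n => a (n+1)) (fun n => b (n+1)) N := by
  constructor
  · intro n h1 h2
    exact h.1 (n+1) (by omega) (by omega)
  · intro h1
    exact h.2 (by omega)

lemma unit_pair : ∀ N (a b : ℕ → ℂ), good a b N →
    coMat a b N ∈ Matrix.unitaryGroup (Fin N) ℂ ∧
    ceMat a b N ∈ Matrix.unitaryGroup (Fin N) ℂ := by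
  intro N
  induction N with
  | zero =>
    intro a b _
    constructor <;>
    · rw [Matrix.mem_unitaryGroup_iff]
      ext i j
      exact absurd i.2 (by omega)
  | succ N ih =>
    intro a b hg
    have hshift := good_shift hg
    have hce : ceMat a b (N+1) ∈ Matrix.unitaryGroup (Fin (N+1)) ℂ := by
      rw [keyE, op1_unitary_iff]
      exact (ih _ _ hshift).1
    refine ⟨?_, hce⟩
    rw [keyO]
    have hth : th2 (a 1) (b 1) (N+1) ∈ Matrix.unitaryGroup (Fin (N+1)) ℂ := by
      cases N with
      | zero => exact th2_unitary_one (hg.2 (by omega))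
      | succ N' => exact th2_unitary (by omega) (hg.1 1 (by omega) (by omega))
    have hop : op1 (ceMat (fun n => a (n+1)) (fun n => b (n+1)) N)
        ∈ Matrix.unitaryGroup (Fin (N+1)) ℂ := by
      rw [op1_unitary_iff]
      exact (ih _ _ hshift).2
    exact mul_mem hth hop

lemma sum_normSq_col {n : ℕ} {U : Matrix (Fin n) (Fin n) ℂ}
    (hU : U ∈ Matrix.unitaryGroup (Fin n) ℂ) (p : Fin n) :
    ∑ k, Complex.normSq (U k p) = 1 := by
  have h := congrFun (congrFun ((Matrix.mem_unitaryGroup_iff').mp hU) p) p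
  rw [Matrix.mul_apply, Matrix.one_apply_eq] at h
  have he : ∀ k : Fin n, (star U) p k * U k p = (Complex.normSq (U k p) : ℂ) := fun k => by
    rw [Matrix.star_apply, star_def, mul_comm, Complex.mul_conj]
  rw [Finset.sum_congr rfl (fun k _ => he k), ← Complex.ofReal_sum] at h
  exact_mod_cast h

lemma sum_normSq_row {n : ℕ} {U : Matrix (Fin n) (Fin n) ℂ}
    (hU : U ∈ Matrix.unitaryGroup (Fin n) ℂ) (p : Fin n) :
    ∑ k, Complex.normSq (U p k) = 1 := by
  have h := congrFun (congrFun ((Matrix.mem_unitaryGroup_iff).mp hU) p) p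
  rw [Matrix.mul_apply, Matrix.one_apply_eq] at h
  have he : ∀ k : Fin n, U p k * (star U) k p = (Complex.normSq (U p k) : ℂ) := fun k => by
    rw [Matrix.star_apply, star_def, Complex.mul_conj]
  rw [Finset.sum_congr rfl (fun k _ => he k), ← Complex.ofReal_sum] at h
  exact_mod_cast h

lemma unitary_entry_one {n : ℕ} {U : Matrix (Fin n) (Fin n) ℂ}
    (hU : U ∈ Matrix.unitaryGroup (Fin n) ℂ) {p : Fin n} (h1 : U p p = 1) :
    ∀ k, k ≠ p → U k p = 0 ∧ U p k = 0 := by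
  have key : ∀ (f : Fin n → ℂ), f p = 1 → ∑ k, Complex.normSq (f k) = 1 →
      ∀ k, k ≠ p → f k = 0 := by
    intro f hfp hsum k hk
    have h3 : ∑ m ∈ Finset.univ.erase p, Complex.normSq (f m) = 0 := by
      have h4 := Finset.add_sum_erase Finset.univ (fun m => Complex.normSq (f m))
        (Finset.mem_univ p)
      simp only [hfp, Complex.normSq_one] at h4
      rw [hsum] at h4
      linarith
    have h5 := (Finset.sum_eq_zero_iff_of_nonneg
      (fun m _ => Complex.normSq_nonneg (f m))).mp h3
    exact Complex.normSq_eq_zero.mp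
      (h5 k (Finset.mem_erase.mpr ⟨hk, Finset.mem_univ k⟩))
  exact fun k hk =>
    ⟨key (fun m => U m p) h1 (sum_normSq_col hU p) k hk,
     key (fun m => U p m) h1 (sum_normSq_row hU p) k hk⟩

lemma coMat_congr {a b a' b' : ℕ → ℂ} {N : ℕ}
    (ha : ∀ n, 1 ≤ n → a n = a' n) (hb : ∀ n, 1 ≤ n → b n = b' n) :
    coMat a b N = coMat a' b' N := by
  ext i j
  simp only [coMat, Nat.even_iff]
  split_ifs <;> first
    | rfl
    | (rw [ha _ (by omega)])
    | (rw [hb _ (by omega)])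

lemma ceMat_congr {a b a' b' : ℕ → ℂ} {N : ℕ}
    (ha : ∀ n, 1 ≤ n → a n = a' n) (hb : ∀ n, 1 ≤ n → b n = b' n) :
    ceMat a b N = ceMat a' b' N := by
  ext i j
  simp only [ceMat, Nat.even_iff, Nat.odd_iff]
  split_ifs <;> first
    | rfl
    | (rw [ha _ (by omega)])
    | (rw [hb _ (by omega)])

lemma fwd : ∀ N, 1 ≤ N → ∀ C : Matrix (Fin N) (Fin N) ℂ, ParaTridiagonal C →
    C ∈ Matrix.unitaryGroup (Fin N) ℂ →
    ∃ a b : ℕ → ℂ,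
      (∀ n, 1 ≤ n → n ≤ N - 1 → ‖a n‖ ^ 2 + ‖b n‖ ^ 2 = 1) ∧
      ‖a N‖ = 1 ∧ C = coMat a b N * (ceMat a b N)ᵀ := by
  intro N
  induction N using Nat.strong_induction_on with
  | _ N ih =>
  intro hN C hpt hU
  match N, hN, C, hpt, hU, ih with
  | 1, _, C, hpt, hU, ih =>
    refine ⟨fun _ => -C 0 0, fun _ => 0, fun n h1 h2 => by omega, ?_, ?_⟩
    · have h := sum_normSq_row hU 0
      rw [Fin.sum_univ_one] at h
      have habs : ‖C 0 0‖ ^ 2 = 1 := by rw [Complex.sq_norm]; exact h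
      have h0 := norm_nonneg (C 0 0)
      have : ‖C 0 0‖ = 1 := by nlinarith
      simpa using this
    · ext i j
      have hi : i = 0 := Fin.fin_one_eq_zero i
      have hj : j = 0 := Fin.fin_one_eq_zero j
      subst hi; subst hj
      rw [Matrix.mul_apply, Fin.sum_univ_one, Matrix.transpose_apply]
      simp [coMat, ceMat]
  | (M+2), _, C, hpt, hU, ih =>
    set x := -C ⟨0, by omega⟩ ⟨0, by omega⟩ with hxdef
    set y := C ⟨1, by omega⟩ ⟨0, by omega⟩ with hydef
    -- column zero support
    have hcol : ∀ i : Fin (M+2), 2 ≤ (i:ℕ) → C i ⟨0, by omega⟩ = 0 := by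
      intro i hi
      exact hpt i _ (Or.inl ⟨by simpa using hi, by simp⟩)
    -- norm of column 0
    have hs : Complex.normSq (C ⟨0, by omega⟩ ⟨0, by omega⟩)
        + Complex.normSq (C ⟨1, by omega⟩ ⟨0, by omega⟩) = 1 := by
      have h := sum_normSq_col hU ⟨0, by omega⟩
      rwa [sum_two _ ⟨0, by omega⟩ ⟨1, by omega⟩ (by simp [Fin.ext_iff])
        (fun k hk0 hk1 => by
          rw [hcol k (by
            have v0 : (k:ℕ) ≠ 0 := fun h => hk0 (Fin.ext h)
            have v1 : (k:ℕ) ≠ 1 := fun h => hk1 (Fin.ext h)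
            omega), Complex.normSq_zero])] at h
    have habs1 : ‖x‖ ^ 2 + ‖y‖ ^ 2 = 1 := by
      rw [Complex.sq_norm, Complex.sq_norm, hxdef, hydef, Complex.normSq_neg]
      exact hs
    have hcc : x * (starRingEnd ℂ) x + y * (starRingEnd ℂ) y = 1 := abs_cond_to_c habs1
    have th2u : th2 x y (M+2) ∈ Matrix.unitaryGroup (Fin (M+2)) ℂ :=
      th2_unitary (by omega) habs1
    have th2cu : th2 ((starRingEnd ℂ) x) y (M+2) ∈ Matrix.unitaryGroup (Fin (M+2)) ℂ :=
      th2_unitary (by omega) (by simpa using habs1)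
    set C' := th2 ((starRingEnd ℂ) x) y (M+2) * C with hC'def
    have hC'U : C' ∈ Matrix.unitaryGroup (Fin (M+2)) ℂ := mul_mem th2cu hU
    have hrecover : C = th2 x y (M+2) * C' := by
      rw [hC'def, ← mul_assoc]
      have : th2 x y (M+2) * th2 ((starRingEnd ℂ) x) y (M+2) = 1 := by
        have h := (Matrix.mem_unitaryGroup_iff).mp th2u
        rwa [Matrix.star_eq_conjTranspose, th2_conjTranspose] at h
      rw [this, one_mul]
    -- C' 0 0 = 1
    have hC'00 : C' ⟨0, by omega⟩ ⟨0, by omega⟩ = 1 := by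
      rw [hC'def, th2_mul_apply_lt (by omega) _ _ _ _ (by simp)]
      have e0 : th2 ((starRingEnd ℂ) x) y (M+2) ⟨0, by omega⟩ ⟨0, by omega⟩
          = -(starRingEnd ℂ) x := by simp [th2]
      have e1 : th2 ((starRingEnd ℂ) x) y (M+2) ⟨0, by omega⟩ ⟨1, by omega⟩
          = (starRingEnd ℂ) y := by simp [th2]
      rw [e0, e1, hxdef, hydef]
      have hmc : ∀ z : ℂ, (starRingEnd ℂ) z * z = (Complex.normSq z : ℂ) := fun z => by
        rw [mul_comm, Complex.mul_conj]
      simp only [map_neg, neg_neg, hmc]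
      rw [← Complex.ofReal_add, hs, Complex.ofReal_one]
    -- C' = op1 C''
    set C2 : Matrix (Fin (M+1)) (Fin (M+1)) ℂ := C'.submatrix Fin.succ Fin.succ with hC2def
    have hz : (⟨0, by omega⟩ : Fin (M+2)) = 0 := rfl
    have hC'op : C' = op1 C2 := by
      ext i j
      induction i using Fin.cases with
      | zero =>
        induction j using Fin.cases with
        | zero => rw [op1_zero_zero, ← hz]; exact hC'00
        | succ j =>
          rw [op1_zero_succ]
          exact (unitary_entry_one hC'U (hz ▸ hC'00) j.succ (Fin.succ_ne_zero j)).2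
      | succ i =>
        induction j using Fin.cases with
        | zero =>
          rw [op1_succ_zero]
          exact (unitary_entry_one hC'U (hz ▸ hC'00) i.succ (Fin.succ_ne_zero i)).1
        | succ j => rw [op1_succ_succ]; rfl
    have hC2U : C2 ∈ Matrix.unitaryGroup (Fin (M+1)) ℂ :=
      (op1_unitary_iff C2).mp (hC'op ▸ hC'U)
    have hC2TU : C2ᵀ ∈ Matrix.unitaryGroup (Fin (M+1)) ℂ := transpose_unitary hC2U
    -- entries of C' in rows ≥ 2 agree with C
    have hC'row : ∀ (p q : Fin (M+2)), 2 ≤ (p:ℕ) → C' p q = C p q := by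
      intro p q hp
      rw [hC'def, th2_mul_apply_ge _ _ _ _ hp]
    have hC2Tpt : ParaTridiagonal C2ᵀ := by
      intro i j hcond
      have hval : C2ᵀ i j = C' j.succ i.succ := rfl
      rw [hval]
      rcases hcond with ⟨h1, h2⟩ | ⟨h1, h2⟩
      · simp only [Nat.odd_iff] at h2
        by_cases hj : 1 ≤ (j:ℕ)
        · rw [hC'row _ _ (by simp [Fin.val_succ]; omega)]
          refine hpt _ _ (Or.inr ⟨by simp [Fin.val_succ]; omega, ?_⟩)
          simp only [Fin.val_succ, Nat.even_iff]
          omega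
        · rw [hC'def, th2_mul_apply_lt (by omega) _ _ _ (i := j.succ) _ (show ((j.succ : Fin (M+2)) : ℕ) < 2 by rw [Fin.val_succ]; omega)]
          have hA : C ⟨0, by omega⟩ i.succ = 0 := by
            refine hpt _ _ (Or.inr ⟨by simp [Fin.val_succ]; omega, ?_⟩)
            simp only [Fin.val_succ, Nat.even_iff]
            omega
          have hB : C ⟨1, by omega⟩ i.succ = 0 := by
            refine hpt _ _ (Or.inr ⟨by simp [Fin.val_succ]; omega, ?_⟩)
            simp only [Fin.val_succ, Nat.even_iff]
            omega
          rw [hA, hB, mul_zero, mul_zero, add_zero]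
      · simp only [Nat.even_iff] at h2
        rw [hC'row _ _ (by simp [Fin.val_succ]; omega)]
        refine hpt _ _ (Or.inl ⟨by simp [Fin.val_succ]; omega, ?_⟩)
        simp only [Fin.val_succ, Nat.odd_iff]
        omega
    obtain ⟨a', b', hg1, hg2, hfac⟩ := ih (M+1) (by omega) (by omega) C2ᵀ hC2Tpt hC2TU
    have hC2fac : C2 = ceMat a' b' (M+1) * (coMat a' b' (M+1))ᵀ := by
      have h := congrArg Matrix.transpose hfac
      rwa [Matrix.transpose_transpose, Matrix.transpose_mul, Matrix.transpose_transpose] at h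
    refine ⟨fun n => if n = 1 then x else a' (n-1), fun n => if n = 1 then y else b' (n-1),
      ?_, ?_, ?_⟩
    · intro n h1 h2
      by_cases hn : n = 1
      · subst hn; simpa using habs1
      · simp only [if_neg hn]
        exact hg1 (n-1) (by omega) (by omega)
    · have hne : ¬ (M+2 = 1) := by omega
      simp only [if_neg hne]
      exact hg2
    · have hce : ceMat (fun n => if n+1 = 1 then x else a' (n+1-1))
            (fun n => if n+1 = 1 then y else b' (n+1-1)) (M+1) = ceMat a' b' (M+1) :=
        ceMat_congr (fun n hn => by rw [if_neg (show ¬ n+1 = 1 by omega)]; simp)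
          (fun n hn => by rw [if_neg (show ¬ n+1 = 1 by omega)]; simp)
      have hco : coMat (fun n => if n+1 = 1 then x else a' (n+1-1))
            (fun n => if n+1 = 1 then y else b' (n+1-1)) (M+1) = coMat a' b' (M+1) :=
        coMat_congr (fun n hn => by rw [if_neg (show ¬ n+1 = 1 by omega)]; simp)
          (fun n hn => by rw [if_neg (show ¬ n+1 = 1 by omega)]; simp)
      have e1 : coMat (fun n => if n = 1 then x else a' (n-1))
            (fun n => if n = 1 then y else b' (n-1)) (M+2)
          = th2 x y (M+2) * op1 (ceMat a' b' (M+1)) := by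
        rw [keyO]
        beta_reduce
        rw [hce]
        norm_num
      have e2 : ceMat (fun n => if n = 1 then x else a' (n-1))
            (fun n => if n = 1 then y else b' (n-1)) (M+2)
          = op1 (coMat a' b' (M+1)) := by
        rw [keyE]
        beta_reduce
        rw [hco]
      rw [e1, e2]
      rw [hrecover, hC'op, hC2fac, ← op1_mul, ← mul_assoc, ← op1_transpose]

/-- A finite `N×N` para-tridiagonal matrix is unitary iff it can be written as
`C_o · C_eᵀ` with parameters satisfying `|a_n|² + |b_n|² = 1` for `1 ≤ n ≤ N-1`
and `|a_N| = 1`. -/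
theorem stmt_3 (N : ℕ) (hN : 1 ≤ N) (C : Matrix (Fin N) (Fin N) ℂ)
    (hC : ParaTridiagonal C) :
    C ∈ Matrix.unitaryGroup (Fin N) ℂ ↔
      ∃ a b : ℕ → ℂ,
        (∀ n, 1 ≤ n → n ≤ N - 1 → ‖a n‖ ^ 2 + ‖b n‖ ^ 2 = 1) ∧
        ‖a N‖ = 1 ∧
        C = coMat a b N * (ceMat a b N)ᵀ := by
  constructor
  · intro hU
    exact fwd N hN C hC hU
  · rintro ⟨a, b, h1, h2, rfl⟩
    have hg : good a b N := ⟨h1, fun _ => h2⟩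
    obtain ⟨hco, hce⟩ := unit_pair N a b hg
    exact mul_mem hco (transpose_unitary hce)
end

section
/- Let H be an infinite isometric Hessenberg matrix over ℓ², i.e., its n-th column h_n lies in span{e₁,…,e_{n+1}} and H*H = I. Then there exist sequences (a_n), (b_n) in ℂ with a₀ = 1 and |a_n|² + |b_n|² = 1 for all n ≥ 1 such that h_n = b_n e_{n+1} - a_n v_n, where v_n = Σ_{i=1}^n conj(a_{i-1}) conj(b_i) conj(b_{i+1}) ⋯ conj(b_{n-1}) e_i. -/
open Complex Matrix


noncomputable def bb (H : ℕ → ℕ → ℂ) : ℕ → ℂ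
  | 0 => 0
  | (n+1) => H (n+1) n

noncomputable def aa (H : ℕ → ℕ → ℂ) : ℕ → ℂ
  | 0 => 1
  | (j+1) => -∑ i ∈ (Finset.range (j+1)).attach,
      aa H i.1 * (∏ k ∈ Finset.Ico (i.1+1) (j+1), bb H k) * H i.1 j
  decreasing_by exact Finset.mem_range.mp i.2

noncomputable def ww (H : ℕ → ℕ → ℂ) (j i : ℕ) : ℂ :=
  (starRingEnd ℂ) (aa H i) * ∏ k ∈ Finset.Ico (i+1) (j+1), (starRingEnd ℂ) (bb H k)

lemma aaSucc (H : ℕ → ℕ → ℂ) (j : ℕ) : aa H (j+1) = -∑ i ∈ Finset.range (j+1),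
    aa H i * (∏ k ∈ Finset.Ico (i+1) (j+1), bb H k) * H i j := by
  rw [aa, ← Finset.sum_attach (Finset.range (j+1))
    (fun i => aa H i * (∏ k ∈ Finset.Ico (i+1) (j+1), bb H k) * H i j)]

lemma colsum (H : ℕ → ℕ → ℂ) (hHess : ∀ i j, j + 1 < i → H i j = 0) {m : ℕ} (k : ℕ) {N : ℕ}
    (hm : m + 1 < N) :
    ∑' i, (starRingEnd ℂ) (H i m) * H i k = ∑ i ∈ Finset.range N, (starRingEnd ℂ) (H i m) * H i k := by
  apply tsum_eq_sum
  intro i hi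
  simp only [Finset.mem_range, not_lt] at hi
  rw [hHess i m (by omega)]
  simp

noncomputable def MM (H : ℕ → ℕ → ℂ) (j : ℕ) : Matrix (Fin (j+1)) (Fin (j+1)) ℂ :=
  fun i m => if (m:ℕ) < j then H i m else ww H j i

lemma main (H : ℕ → ℕ → ℂ)
    (hHess : ∀ i j, j + 1 < i → H i j = 0)
    (hIso : ∀ j k, ∑' i, (starRingEnd ℂ) (H i j) * H i k = if j = k then 1 else 0) :
    ∀ j : ℕ,
      (∀ i, i ≤ j → H i j = -aa H (j+1) * ww H j i) ∧
      ((starRingEnd ℂ) (aa H (j+1)) * aa H (j+1)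
        + (starRingEnd ℂ) (bb H (j+1)) * bb H (j+1) = 1) ∧
      (∑ i ∈ Finset.range (j+1), (starRingEnd ℂ) (ww H j i) * ww H j i = 1) := by
  intro j
  induction j using Nat.strong_induction_on with
  | _ j IH =>
  -- Step 1: norm of w_j is 1
  have hR : ∑ i ∈ Finset.range (j+1), (starRingEnd ℂ) (ww H j i) * ww H j i = 1 := by
    match j with
    | 0 => simp [ww, aa]
    | (j'+1) =>
      have hQ := (IH j' (by omega)).2.1
      have hR' := (IH j' (by omega)).2.2
      rw [Finset.sum_range_succ]
      have h1 : ∀ i ∈ Finset.range (j'+1), (starRingEnd ℂ) (ww H (j'+1) i) * ww H (j'+1) i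
          = ((starRingEnd ℂ) (ww H j' i) * ww H j' i)
            * ((starRingEnd ℂ) (bb H (j'+1)) * bb H (j'+1)) := by
        intro i hi
        simp only [Finset.mem_range] at hi
        have hs : ww H (j'+1) i = ww H j' i * (starRingEnd ℂ) (bb H (j'+1)) := by
          rw [ww, ww, mul_assoc]
          congr 1
          rw [← Finset.prod_Ico_consecutive (fun k => (starRingEnd ℂ) (bb H k))
            (by omega : i+1 ≤ j'+1) (by omega : j'+1 ≤ j'+1+1)]
          simp
        rw [hs]
        simp only [_root_.map_mul, Complex.conj_conj]
        ring
      rw [Finset.sum_congr rfl h1, ← Finset.sum_mul, hR', one_mul]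
      have h2 : ww H (j'+1) (j'+1) = (starRingEnd ℂ) (aa H (j'+1)) := by
        rw [ww]
        simp
      rw [h2, Complex.conj_conj]
      linear_combination hQ
  -- Step 2: orthogonality of previous columns with w_j
  have hOrth : ∀ m, m < j →
      ∑ i ∈ Finset.range (j+1), (starRingEnd ℂ) (H i m) * ww H j i = 0 := by
    intro m hm
    obtain ⟨hPm, hQm, hRm⟩ := IH m hm
    rw [← Finset.sum_range_add_sum_Ico _ (by omega : m+2 ≤ j+1)]
    have hzero : ∑ i ∈ Finset.Ico (m+2) (j+1), (starRingEnd ℂ) (H i m) * ww H j i = 0 := by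
      apply Finset.sum_eq_zero
      intro i hi
      simp only [Finset.mem_Ico] at hi
      rw [hHess i m (by omega)]
      simp
    rw [hzero, add_zero, Finset.sum_range_succ]
    have h1 : ∀ i ∈ Finset.range (m+1), (starRingEnd ℂ) (H i m) * ww H j i
        = (-(starRingEnd ℂ) (aa H (m+1))) * (((starRingEnd ℂ) (ww H m i) * ww H m i)
            * ∏ k ∈ Finset.Ico (m+1) (j+1), (starRingEnd ℂ) (bb H k)) := by
      intro i hi
      simp only [Finset.mem_range] at hi
      rw [hPm i (by omega)]
      have hsplit : ww H j i = ww H m i * ∏ k ∈ Finset.Ico (m+1) (j+1), (starRingEnd ℂ) (bb H k) := by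
        rw [ww, ww, mul_assoc]
        congr 1
        exact (Finset.prod_Ico_consecutive _ (by omega) (by omega)).symm
      rw [hsplit]
      simp only [_root_.map_mul, _root_.map_neg]
      ring
    rw [Finset.sum_congr rfl h1, ← Finset.mul_sum, ← Finset.sum_mul, hRm, one_mul]
    have hb : H (m+1) m = bb H (m+1) := rfl
    rw [hb, ww, Finset.prod_eq_prod_Ico_succ_bot (by omega : m+1 < j+1)
      (fun k => (starRingEnd ℂ) (bb H k))]
    ring
  -- Step 3: M^H * M = 1 and M * M^H = 1
  have hMM : (MM H j)ᴴ * (MM H j) = 1 := by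
    ext m m'
    simp only [Matrix.mul_apply, Matrix.conjTranspose_apply, Matrix.one_apply, MM,
      ← starRingEnd_apply]
    by_cases hm : (m:ℕ) < j
    · by_cases hm' : (m':ℕ) < j
      · simp only [if_pos hm, if_pos hm']
        rw [Fin.sum_univ_eq_sum_range (fun i => (starRingEnd ℂ) (H i m) * H i m')]
        rw [← colsum H hHess (m':ℕ) (by omega), hIso]
        by_cases h : m = m'
        · simp [h]
        · rw [if_neg h, if_neg (fun hc => h (Fin.ext hc))]
      · simp only [if_pos hm, if_neg hm']
        rw [Fin.sum_univ_eq_sum_range (fun i => (starRingEnd ℂ) (H i m) * ww H j i)]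
        rw [hOrth m hm, if_neg (by intro hc; rw [hc] at hm; omega : ¬ m = m')]
    · by_cases hm' : (m':ℕ) < j
      · simp only [if_neg hm, if_pos hm']
        rw [Fin.sum_univ_eq_sum_range (fun i => (starRingEnd ℂ) (ww H j i) * H i m')]
        rw [if_neg (by intro hc; rw [hc] at hm; omega : ¬ m = m')]
        have h2 := congrArg (starRingEnd ℂ) (hOrth m' hm')
        simp only [_root_.map_sum, _root_.map_mul, Complex.conj_conj, _root_.map_zero] at h2
        rw [← h2]
        apply Finset.sum_congr rfl
        intro i _
        ring
      · simp only [if_neg hm, if_neg hm']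
        rw [Fin.sum_univ_eq_sum_range (fun i => (starRingEnd ℂ) (ww H j i) * ww H j i), hR]
        have : m = m' := Fin.ext (by omega)
        rw [if_pos this]
  have hMM' : (MM H j) * (MM H j)ᴴ = 1 := mul_eq_one_comm.mpr hMM
  -- Step 4: the column formula
  have hP : ∀ i, i ≤ j → H i j = -aa H (j+1) * ww H j i := by
    intro i hij
    have hii : i < j + 1 := by omega
    have hc : ∀ m : Fin (j+1), ∑ i2 : Fin (j+1), (starRingEnd ℂ) (MM H j i2 m) * H i2 j
        = if (m:ℕ) < j then 0 else -aa H (j+1) := by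
      intro m
      by_cases hm : (m:ℕ) < j
      · simp only [MM, if_pos hm]
        rw [Fin.sum_univ_eq_sum_range (fun i2 => (starRingEnd ℂ) (H i2 m) * H i2 j)]
        rw [← colsum H hHess j (by omega), hIso]
        rw [if_neg (by omega : ¬ (m:ℕ) = j)]
      · simp only [MM, if_neg hm]
        rw [Fin.sum_univ_eq_sum_range (fun i2 => (starRingEnd ℂ) (ww H j i2) * H i2 j)]
        rw [aaSucc, neg_neg]
        apply Finset.sum_congr rfl
        intro i2 _
        rw [ww]
        simp only [_root_.map_mul, _root_.map_prod, Complex.conj_conj]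
    calc H i j = ∑ i2 : Fin (j+1), (if (⟨i,hii⟩:Fin (j+1)) = i2 then (1:ℂ) else 0) * H i2 j := by
          simp
      _ = ∑ i2 : Fin (j+1), ((MM H j) * (MM H j)ᴴ) ⟨i,hii⟩ i2 * H i2 j := by
          rw [hMM']
          simp [Matrix.one_apply]
      _ = ∑ m : Fin (j+1), MM H j ⟨i,hii⟩ m
            * ∑ i2 : Fin (j+1), (starRingEnd ℂ) (MM H j i2 m) * H i2 j := by
          simp only [Matrix.mul_apply, Matrix.conjTranspose_apply, ← starRingEnd_apply,
            Finset.sum_mul, Finset.mul_sum]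
          rw [Finset.sum_comm]
          apply Finset.sum_congr rfl
          intro m _
          apply Finset.sum_congr rfl
          intro i2 _
          ring
      _ = -aa H (j+1) * ww H j i := by
          simp_rw [hc]
          rw [Finset.sum_eq_single (⟨j, by omega⟩ : Fin (j+1))]
          · simp [MM]
            ring
          · intro m _ hmne
            have : (m:ℕ) < j := by
              have : (m:ℕ) ≠ j := fun hc => hmne (Fin.ext hc)
              omega
            rw [if_pos this, mul_zero]
          · intro h
            exact absurd (Finset.mem_univ _) h
  refine ⟨hP, ?_, hR⟩
  -- Step 5: |a|^2 + |b|^2 = 1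
  have h1 := hIso j j
  rw [colsum H hHess j (by omega : j + 1 < j + 2), if_pos rfl, Finset.sum_range_succ] at h1
  have h2 : ∀ i ∈ Finset.range (j+1), (starRingEnd ℂ) (H i j) * H i j
      = ((starRingEnd ℂ) (aa H (j+1)) * aa H (j+1)) * ((starRingEnd ℂ) (ww H j i) * ww H j i) := by
    intro i hi
    simp only [Finset.mem_range] at hi
    rw [hP i (by omega)]
    simp only [_root_.map_mul, _root_.map_neg]
    ring
  rw [Finset.sum_congr rfl h2, ← Finset.mul_sum, hR, mul_one] at h1
  have hb : H (j+1) j = bb H (j+1) := rfl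
  rw [hb] at h1
  exact h1


/-- An infinite isometric Hessenberg matrix (0-indexed entries; paper index = Lean
index + 1): the `j`-th column is supported on rows `≤ j+1` and the columns are
orthonormal in `ℓ²`. Then there are `a, b` with `a₀ = 1`, `|a_n|² + |b_n|² = 1`
(`n ≥ 1`), such that `h_n = b_n e_{n+1} - a_n v_n` with
`v_n = Σ_{i=1}^n conj(a_{i-1}) conj(b_i) ⋯ conj(b_{n-1}) e_i`. -/
theorem stmt_4 (H : ℕ → ℕ → ℂ)
    (hHess : ∀ i j, j + 1 < i → H i j = 0)
    (hIso : ∀ j k, ∑' i, (starRingEnd ℂ) (H i j) * H i k = if j = k then 1 else 0) :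
    ∃ a b : ℕ → ℂ, a 0 = 1 ∧
      (∀ n, 1 ≤ n → ‖a n‖ ^ 2 + ‖b n‖ ^ 2 = 1) ∧
      ∀ i j, H i j = b (j + 1) * (if i = j + 1 then 1 else 0)
        - a (j + 1) * (if i ≤ j then
            (starRingEnd ℂ) (a i) * ∏ k ∈ Finset.Ico (i + 1) (j + 1), (starRingEnd ℂ) (b k)
          else 0) := by
  refine ⟨aa H, bb H, by rw [aa], ?_, ?_⟩
  · intro n hn
    obtain ⟨m, rfl⟩ : ∃ m, n = m + 1 := ⟨n - 1, by omega⟩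
    have hQ := (main H hHess hIso m).2.1
    rw [← Complex.normSq_eq_conj_mul_self, ← Complex.normSq_eq_conj_mul_self] at hQ
    rw [Complex.sq_norm, Complex.sq_norm]
    exact_mod_cast hQ
  · intro i j
    rcases lt_trichotomy i (j+1) with h | h | h
    · have hP := (main H hHess hIso j).1 i (by omega)
      rw [if_neg (by omega), if_pos (by omega), hP, ww]
      ring
    · subst h
      rw [if_pos rfl, if_neg (by omega)]
      have hb : H (j+1) j = bb H (j+1) := rfl
      rw [hb]
      ring
    · rw [hHess i j h, if_neg (by omega), if_neg (by omega)]
      ring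
end

section
/- Conversely, if sequences (a_n)_{n≥0}, (b_n)_{n≥1} in ℂ satisfy a₀ = 1 and |a_n|² + |b_n|² = 1 for all n ≥ 1, and h_n := b_n e_{n+1} - a_n v_n with v_n := Σ_{i=1}^n conj(a_{i-1}) conj(b_i)⋯conj(b_{n-1}) e_i, then {h_n}_{n≥1} is an orthonormal set in ℓ²; in particular each v_n is a unit vector orthogonal to h₁,…,h_{n-1}. -/
open Complex

lemma L1 (a b : ℕ → ℂ) (ha0 : a 0 = 1)
    (hab : ∀ n, 1 ≤ n → ‖a n‖ ^ 2 + ‖b n‖ ^ 2 = 1) :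
    ∀ n, 1 ≤ n → ∑ i ∈ Finset.range n,
      (starRingEnd ℂ) (a i) * a i * ∏ k ∈ Finset.Ico (i + 1) n,
        ((starRingEnd ℂ) (b k) * b k) = 1 := by
  have hC : ∀ n, 1 ≤ n →
      (starRingEnd ℂ) (a n) * a n + (starRingEnd ℂ) (b n) * b n = 1 := by
    intro n hn
    rw [mul_comm, Complex.mul_conj, mul_comm ((starRingEnd ℂ) (b n)), Complex.mul_conj,
      ← Complex.ofReal_add, ← Complex.sq_norm, ← Complex.sq_norm, hab n hn, Complex.ofReal_one]
  intro n hn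
  induction n with
  | zero => omega
  | succ n ih =>
    rcases Nat.eq_or_lt_of_le hn with h1 | h1
    · simp [← h1, ha0]
    · have hn' : 1 ≤ n := by omega
      rw [Finset.sum_range_succ]
      have hstep : ∀ i ∈ Finset.range n,
          (starRingEnd ℂ) (a i) * a i * ∏ k ∈ Finset.Ico (i + 1) (n + 1),
            ((starRingEnd ℂ) (b k) * b k)
          = ((starRingEnd ℂ) (a i) * a i * ∏ k ∈ Finset.Ico (i + 1) n,
            ((starRingEnd ℂ) (b k) * b k)) * ((starRingEnd ℂ) (b n) * b n) := by
        intro i hi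
        rw [Finset.mem_range] at hi
        rw [Finset.prod_Ico_succ_top (by omega)]
        ring
      rw [Finset.sum_congr rfl hstep, ← Finset.sum_mul, ih hn', one_mul,
        Finset.Ico_self, Finset.prod_empty, mul_one, add_comm, hC n hn']

lemma L2 (a b : ℕ → ℂ) (ha0 : a 0 = 1)
    (hab : ∀ n, 1 ≤ n → ‖a n‖ ^ 2 + ‖b n‖ ^ 2 = 1)
    (v : ℕ → ℕ → ℂ)
    (hv : ∀ n i, v n i = if i + 1 ≤ n then
        (starRingEnd ℂ) (a i) * ∏ k ∈ Finset.Ico (i + 1) n, (starRingEnd ℂ) (b k)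
      else 0) :
    ∀ m n, 1 ≤ m → m ≤ n → ∑ i ∈ Finset.range m,
      (starRingEnd ℂ) (v m i) * v n i = ∏ k ∈ Finset.Ico m n, (starRingEnd ℂ) (b k) := by
  intro m n hm hmn
  have hterm : ∀ i ∈ Finset.range m,
      (starRingEnd ℂ) (v m i) * v n i
      = ((starRingEnd ℂ) (a i) * a i * ∏ k ∈ Finset.Ico (i + 1) m,
          ((starRingEnd ℂ) (b k) * b k)) * ∏ k ∈ Finset.Ico m n, (starRingEnd ℂ) (b k) := by
    intro i hi
    rw [Finset.mem_range] at hi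
    rw [hv m i, hv n i, if_pos (by omega), if_pos (by omega),
      ← Finset.prod_Ico_consecutive (fun k => (starRingEnd ℂ) (b k)) (by omega : i + 1 ≤ m) hmn,
      map_mul, map_prod]
    simp only [Complex.conj_conj]
    rw [Finset.prod_mul_distrib]
    ring
  rw [Finset.sum_congr rfl hterm, ← Finset.sum_mul, L1 a b ha0 hab m hm, one_mul]

/-- Conversely: if `a₀ = 1`, `|a_n|² + |b_n|² = 1` (`n ≥ 1`), and
`h_n = b_n e_{n+1} - a_n v_n` with `v_n = Σ_{i=1}^n conj(a_{i-1}) conj(b_i)⋯conj(b_{n-1}) e_i`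
(rows 0-indexed: row `i` here is paper row `i+1`), then `{h_n}_{n≥1}` is orthonormal in `ℓ²`;
in particular each `v_n` is a unit vector orthogonal to `h₁, …, h_{n-1}`. -/
theorem stmt_5 (a b : ℕ → ℂ) (ha0 : a 0 = 1)
    (hab : ∀ n, 1 ≤ n → ‖a n‖ ^ 2 + ‖b n‖ ^ 2 = 1)
    (v h : ℕ → ℕ → ℂ)
    (hv : ∀ n i, v n i = if i + 1 ≤ n then
        (starRingEnd ℂ) (a i) * ∏ k ∈ Finset.Ico (i + 1) n, (starRingEnd ℂ) (b k)
      else 0)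
    (hh : ∀ n i, h n i = b n * (if i = n then 1 else 0) - a n * v n i) :
    (∀ m n, 1 ≤ m → 1 ≤ n →
        ∑' i, (starRingEnd ℂ) (h m i) * h n i = if m = n then 1 else 0) ∧
    (∀ n, 1 ≤ n → ∑' i, (starRingEnd ℂ) (v n i) * v n i = 1) ∧
    (∀ m n, 1 ≤ m → m < n → ∑' i, (starRingEnd ℂ) (h m i) * v n i = 0) := by
  have hC : ∀ n, 1 ≤ n →
      (starRingEnd ℂ) (a n) * a n + (starRingEnd ℂ) (b n) * b n = 1 := by
    intro n hn
    rw [mul_comm, Complex.mul_conj, mul_comm ((starRingEnd ℂ) (b n)), Complex.mul_conj,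
      ← Complex.ofReal_add, ← Complex.sq_norm, ← Complex.sq_norm, hab n hn, Complex.ofReal_one]
  have hv0 : ∀ n i, n ≤ i → v n i = 0 := by
    intro n i hi; rw [hv, if_neg (by omega)]
  have hh0 : ∀ n i, n < i → h n i = 0 := by
    intro n i hi; rw [hh, if_neg (by omega), hv0 n i (by omega)]; ring
  -- S4 over an extended range
  have S4 : ∀ m n N, 1 ≤ m → m ≤ n → m ≤ N →
      ∑ i ∈ Finset.range N, (starRingEnd ℂ) (v m i) * v n i
        = ∏ k ∈ Finset.Ico m n, (starRingEnd ℂ) (b k) := by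
    intro m n N hm hmn hmN
    rw [← Finset.sum_subset (Finset.range_subset_range.mpr hmN)
      (fun i _ hi => by
        rw [Finset.mem_range, not_lt] at hi
        rw [hv0 m i hi, map_zero, zero_mul])]
    exact L2 a b ha0 hab v hv m n hm hmn
  -- key finite-sum computation for ⟪h m, h n⟫, m ≤ n
  have key : ∀ m n, 1 ≤ m → m ≤ n →
      ∑ i ∈ Finset.range (n + 1), (starRingEnd ℂ) (h m i) * h n i
        = if m = n then 1 else 0 := by
    intro m n hm hmn
    have expand : ∀ i, (starRingEnd ℂ) (h m i) * h n i =
        (starRingEnd ℂ) (b m) * b n * ((if i = m then (1:ℂ) else 0) * (if i = n then 1 else 0))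
        - (starRingEnd ℂ) (b m) * a n * ((if i = m then (1:ℂ) else 0) * v n i)
        - (starRingEnd ℂ) (a m) * b n * ((starRingEnd ℂ) (v m i) * (if i = n then (1:ℂ) else 0))
        + (starRingEnd ℂ) (a m) * a n * ((starRingEnd ℂ) (v m i) * v n i) := by
      intro i
      rw [hh m i, hh n i]
      simp only [map_sub, map_mul, apply_ite (starRingEnd ℂ), map_one, map_zero]
      ring
    rw [Finset.sum_congr rfl (fun i _ => expand i)]
    simp only [Finset.sum_add_distrib, Finset.sum_sub_distrib, ← Finset.mul_sum]
    have S1 : ∑ i ∈ Finset.range (n + 1),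
        ((if i = m then (1:ℂ) else 0) * (if i = n then 1 else 0))
        = if m = n then 1 else 0 := by
      simp only [ite_mul, one_mul, zero_mul]
      rw [Finset.sum_ite_eq' (Finset.range (n+1)) m, if_pos (Finset.mem_range.mpr (by omega))]
    have S2 : ∑ i ∈ Finset.range (n + 1), ((if i = m then (1:ℂ) else 0) * v n i)
        = v n m := by
      simp only [ite_mul, one_mul, zero_mul]
      rw [Finset.sum_ite_eq' (Finset.range (n+1)) m, if_pos (Finset.mem_range.mpr (by omega))]
    have S3 : ∑ i ∈ Finset.range (n + 1),
        ((starRingEnd ℂ) (v m i) * (if i = n then (1:ℂ) else 0)) = 0 := by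
      simp only [mul_ite, mul_one, mul_zero]
      rw [Finset.sum_ite_eq' (Finset.range (n+1)) n, if_pos (Finset.mem_range.mpr (by omega)),
        hv0 m n hmn, map_zero]
    rw [S1, S2, S3, S4 m n (n+1) hm hmn (by omega), mul_zero]
    rcases Nat.eq_or_lt_of_le hmn with rfl | hlt
    · rw [if_pos rfl, hv0 m m le_rfl, Finset.Ico_self, Finset.prod_empty]
      rw [mul_zero, mul_one, mul_one]
      have := hC m hm; ring_nf; ring_nf at this; linear_combination this
    · rw [if_neg (by omega), hv n m, if_pos (by omega),
        Finset.prod_eq_prod_Ico_succ_bot hlt]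
      ring
  refine ⟨?_, ?_, ?_⟩
  · -- orthonormality of h
    intro m n hm hn
    rcases lt_trichotomy m n with hlt | rfl | hlt
    · rw [tsum_eq_sum (s := Finset.range (n+1))
        (fun i hi => by
          rw [Finset.mem_range, not_lt] at hi
          rw [hh0 m i (by omega), map_zero, zero_mul]),
        key m n hm (le_of_lt hlt)]
    · rw [tsum_eq_sum (s := Finset.range (m+1))
        (fun i hi => by
          rw [Finset.mem_range, not_lt] at hi
          rw [hh0 m i (by omega), map_zero, zero_mul]),
        key m m hm le_rfl]
    · have : ∑' i, (starRingEnd ℂ) (h m i) * h n i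
          = (starRingEnd ℂ) (∑ i ∈ Finset.range (m+1), (starRingEnd ℂ) (h n i) * h m i) := by
        rw [tsum_eq_sum (s := Finset.range (m+1))
          (fun i hi => by
            rw [Finset.mem_range, not_lt] at hi
            rw [hh0 m i (by omega), map_zero, zero_mul]), map_sum]
        refine Finset.sum_congr rfl (fun i _ => ?_)
        rw [map_mul, Complex.conj_conj]; ring
      rw [this, key n m hn (le_of_lt hlt), if_neg (by omega), if_neg (by omega), map_zero]
  · -- norm of v
    intro n hn
    rw [tsum_eq_sum (s := Finset.range n)
      (fun i hi => by
        rw [Finset.mem_range, not_lt] at hi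
        rw [hv0 n i hi, map_zero, zero_mul]),
      L2 a b ha0 hab v hv n n hn le_rfl, Finset.Ico_self, Finset.prod_empty]
  · -- h m ⊥ v n for m < n
    intro m n hm hmn
    rw [tsum_eq_sum (s := Finset.range n)
      (fun i hi => by
        rw [Finset.mem_range, not_lt] at hi
        rw [hv0 n i hi, mul_zero])]
    have expand : ∀ i, (starRingEnd ℂ) (h m i) * v n i =
        (starRingEnd ℂ) (b m) * ((if i = m then (1:ℂ) else 0) * v n i)
        - (starRingEnd ℂ) (a m) * ((starRingEnd ℂ) (v m i) * v n i) := by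
      intro i
      rw [hh m i]
      simp only [map_sub, map_mul, apply_ite (starRingEnd ℂ), map_one, map_zero]
      ring
    rw [Finset.sum_congr rfl (fun i _ => expand i)]
    simp only [Finset.sum_sub_distrib, ← Finset.mul_sum]
    have S2 : ∑ i ∈ Finset.range n, ((if i = m then (1:ℂ) else 0) * v n i) = v n m := by
      simp only [ite_mul, one_mul, zero_mul]
      rw [Finset.sum_ite_eq' (Finset.range n) m, if_pos (Finset.mem_range.mpr (by omega))]
    rw [S2, S4 m n n hm (le_of_lt hmn) (le_of_lt hmn),
      hv n m, if_pos (by omega), Finset.prod_eq_prod_Ico_succ_bot hmn]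
    ring
end

section
/- Let Ω be a unitary N×N matrix that is (1,q)-diagonal, i.e., Ω_{i,j} = 0 whenever i - j > 1 or j - i > q. If N ≥ q + 2 and all subdiagonal entries Ω_{n+1,n} are nonzero, then a contradiction arises; hence any unitary (1,q)-diagonal matrix of order greater than q+1 decomposes as a direct sum of smaller diagonal blocks. -/
open Complex Matrix

/-- A unitary `N×N` matrix that is `(1,q)`-diagonal (`Ω i j = 0` when `i - j > 1` or
`j - i > q`) with `N ≥ q + 2`: assuming all subdiagonal entries are nonzero yields a
contradiction; hence it decomposes as a direct sum of smaller diagonal blocks. -/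
theorem stmt_7 (N q : ℕ) (Ω : Matrix (Fin N) (Fin N) ℂ)
    (hband : ∀ i j : Fin N, ((j : ℕ) + 1 < i ∨ (i : ℕ) + q < j) → Ω i j = 0)
    (hU : Ω ∈ Matrix.unitaryGroup (Fin N) ℂ) (hN : q + 2 ≤ N) :
    ((∀ n : ℕ, (hn : n + 1 < N) → Ω ⟨n + 1, hn⟩ ⟨n, Nat.lt_of_succ_lt hn⟩ ≠ 0) → False) ∧
    ∃ k, 0 < k ∧ k < N ∧ ∀ i j : Fin N,
      (((i : ℕ) < k ∧ k ≤ j) ∨ ((j : ℕ) < k ∧ k ≤ i)) → Ω i j = 0 := by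
  classical
  have h2 : Ωᴴ * Ω = 1 := Matrix.mem_unitaryGroup_iff'.mp hU
  have h1 : Ω * Ωᴴ = 1 := Matrix.mem_unitaryGroup_iff.mp hU
  have hcol : ∀ j j' : Fin N,
      (∑ i : Fin N, star (Ω i j) * Ω i j') = if j = j' then 1 else 0 := by
    intro j j'
    have := congrFun (congrFun h2 j) j'
    simpa [Matrix.mul_apply, Matrix.one_apply, Matrix.conjTranspose_apply] using this
  have hrow : ∀ i i' : Fin N,
      (∑ j : Fin N, Ω i j * star (Ω i' j)) = if i = i' then 1 else 0 := by
    intro i i'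
    have := congrFun (congrFun h1 i) i'
    simpa [Matrix.mul_apply, Matrix.one_apply, Matrix.conjTranspose_apply] using this
  have part1 : (∀ n : ℕ, (hn : n + 1 < N) → Ω ⟨n + 1, hn⟩ ⟨n, Nat.lt_of_succ_lt hn⟩ ≠ 0) →
      False := by
    intro hsub
    have P : ∀ d : ℕ, ∀ i j : Fin N, (i : ℕ) + (q + 1 - d) ≤ (j : ℕ) → Ω i j = 0 := by
      intro d
      induction d with
      | zero => exact fun i j h => hband i j (Or.inr (by omega))
      | succ d ih =>
        intro i j h
        by_cases hd : q + 1 ≤ d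
        · exact ih i j (by omega)
        by_cases hstrict : (i : ℕ) + (q + 1 - d) ≤ (j : ℕ)
        · exact ih i j hstrict
        have hj : (j : ℕ) = (i : ℕ) + (q - d) := by omega
        by_cases hi0 : (i : ℕ) = 0
        · -- row argument with rows i = 0 and j+1
          have hjN : (j : ℕ) + 1 < N := by omega
          set r : Fin N := ⟨(j : ℕ) + 1, hjN⟩ with hr
          have hir : i ≠ r := by
            intro he
            have : (i : ℕ) = (j : ℕ) + 1 := by rw [he]
            omega
          have hsum := hrow i r
          rw [if_neg hir] at hsum
          have hsingle : (∑ j' : Fin N, Ω i j' * star (Ω r j')) = Ω i j * star (Ω r j) := by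
            apply Finset.sum_eq_single
            · intro j' _ hne
              by_cases hlt : (j' : ℕ) < (j : ℕ)
              · have : Ω r j' = 0 := hband r j' (Or.inl (by simp [hr]; omega))
                simp [this]
              · have hgt : (j : ℕ) < (j' : ℕ) := by
                  rcases lt_or_eq_of_le (not_lt.mp hlt) with h' | h'
                  · exact h'
                  · exact absurd (Fin.ext h'.symm) hne
                have : Ω i j' = 0 := ih i j' (by omega)
                simp [this]
            · intro habs
              exact absurd (Finset.mem_univ j) habs
          rw [hsingle] at hsum
          have hΩ : Ω r ⟨(j : ℕ), Nat.lt_of_succ_lt hjN⟩ ≠ 0 := hsub (j : ℕ) hjN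
          have hjj : (⟨(j : ℕ), Nat.lt_of_succ_lt hjN⟩ : Fin N) = j := Fin.ext rfl
          rw [hjj] at hΩ
          rcases mul_eq_zero.mp hsum with h' | h'
          · exact h'
          · exact absurd (star_eq_zero.mp h') hΩ
        · -- column argument with columns i-1 and j
          have hi1 : 1 ≤ (i : ℕ) := by omega
          have hcN : (i : ℕ) - 1 < N := by omega
          set c : Fin N := ⟨(i : ℕ) - 1, hcN⟩ with hc
          have hcj : c ≠ j := by
            intro he
            have : (i : ℕ) - 1 = (j : ℕ) := by rw [← he]
            omega
          have hsum := hcol c j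
          rw [if_neg hcj] at hsum
          have hsingle : (∑ i' : Fin N, star (Ω i' c) * Ω i' j) = star (Ω i c) * Ω i j := by
            apply Finset.sum_eq_single
            · intro i' _ hne
              by_cases hlt : (i : ℕ) < (i' : ℕ)
              · have : Ω i' c = 0 := hband i' c (Or.inl (by simp [hc]; omega))
                simp [this]
              · have hgt : (i' : ℕ) < (i : ℕ) := by
                  rcases lt_or_eq_of_le (not_lt.mp hlt) with h' | h'
                  · exact h'
                  · exact absurd (Fin.ext h') hne
                have : Ω i' j = 0 := ih i' j (by omega)
                simp [this]
            · intro habs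
              exact absurd (Finset.mem_univ i) habs
          rw [hsingle] at hsum
          have hn1 : (i : ℕ) - 1 + 1 < N := by omega
          have hΩ : Ω ⟨(i : ℕ) - 1 + 1, hn1⟩ ⟨(i : ℕ) - 1, Nat.lt_of_succ_lt hn1⟩ ≠ 0 :=
            hsub ((i : ℕ) - 1) hn1
          have hii : (⟨(i : ℕ) - 1 + 1, hn1⟩ : Fin N) = i := Fin.ext (by simp; omega)
          have hcc : (⟨(i : ℕ) - 1, Nat.lt_of_succ_lt hn1⟩ : Fin N) = c := Fin.ext rfl
          rw [hii, hcc] at hΩ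
          rcases mul_eq_zero.mp hsum with h' | h'
          · exact absurd (star_eq_zero.mp h') hΩ
          · exact h'
    have htri : ∀ i j : Fin N, (i : ℕ) ≤ (j : ℕ) → Ω i j = 0 := by
      intro i j h
      exact P (q + 1) i j (by omega)
    have hNpos : 0 < N := by omega
    set jN : Fin N := ⟨N - 1, by omega⟩ with hjN
    have hsum := hcol jN jN
    rw [if_pos rfl] at hsum
    have : (∑ i : Fin N, star (Ω i jN) * Ω i jN) = 0 := by
      apply Finset.sum_eq_zero
      intro i _
      have : Ω i jN = 0 := htri i jN (by simp [hjN]; omega)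
      simp [this]
    rw [this] at hsum
    exact zero_ne_one hsum
  refine ⟨part1, ?_⟩
  -- extract a vanishing subdiagonal entry
  have hex : ∃ n : ℕ, ∃ hn : n + 1 < N, Ω ⟨n + 1, hn⟩ ⟨n, Nat.lt_of_succ_lt hn⟩ = 0 := by
    by_contra hc
    push_neg at hc
    exact part1 fun n hn => hc n hn
  obtain ⟨n, hn, h0⟩ := hex
  set k : ℕ := n + 1 with hkdef
  have hkN : k ≤ N := le_of_lt hn
  refine ⟨k, Nat.succ_pos n, hn, ?_⟩
  -- lower-left corner vanishes
  have hC : ∀ i j : Fin N, (j : ℕ) < k → k ≤ (i : ℕ) → Ω i j = 0 := by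
    intro i j hj hi
    by_cases h : (j : ℕ) + 1 < (i : ℕ)
    · exact hband i j (Or.inl h)
    · have hi' : i = ⟨n + 1, hn⟩ := Fin.ext (show (i : ℕ) = n + 1 by omega)
      have hj' : j = ⟨n, Nat.lt_of_succ_lt hn⟩ := Fin.ext (show (j : ℕ) = n by omega)
      rw [hi', hj']
      exact h0
  -- sum conversion lemma
  have sumlem : ∀ g : Fin N → ℂ, (∀ i : Fin N, k ≤ (i : ℕ) → g i = 0) →
      (∑ a : Fin k, g (Fin.castLE hkN a)) = ∑ i : Fin N, g i := by
    intro g hg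
    set G : ℕ → ℂ := fun m => if h : m < N then g ⟨m, h⟩ else 0 with hG
    have e1 : (∑ i : Fin N, g i) = ∑ m ∈ Finset.range N, G m := by
      rw [← Fin.sum_univ_eq_sum_range]
      apply Finset.sum_congr rfl
      intro i _
      simp [hG, i.isLt]
    have e2 : (∑ a : Fin k, g (Fin.castLE hkN a)) = ∑ m ∈ Finset.range k, G m := by
      rw [← Fin.sum_univ_eq_sum_range]
      apply Finset.sum_congr rfl
      intro a _
      have ha : (a : ℕ) < N := lt_of_lt_of_le a.isLt hkN
      simp [hG, ha]
      rfl
    rw [e1, e2]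
    apply Finset.sum_subset (Finset.range_subset_range.mpr hkN)
    intro m hm hm'
    have hmN : m < N := Finset.mem_range.mp hm
    have hmk : k ≤ m := le_of_not_gt (fun h => hm' (Finset.mem_range.mpr h))
    simp only [hG, dif_pos hmN]
    exact hg ⟨m, hmN⟩ hmk
  -- the top-left k×k block
  set A : Matrix (Fin k) (Fin k) ℂ :=
    fun a b => Ω (Fin.castLE hkN a) (Fin.castLE hkN b) with hA
  have hAcol : Aᴴ * A = 1 := by
    ext a b
    simp only [Matrix.mul_apply, Matrix.conjTranspose_apply, Matrix.one_apply]
    simp only [hA]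
    have hg : ∀ i : Fin N, k ≤ (i : ℕ) →
        star (Ω i (Fin.castLE hkN a)) * Ω i (Fin.castLE hkN b) = 0 := by
      intro i hi
      have : Ω i (Fin.castLE hkN a) = 0 := hC i _ (by simp) hi
      simp [this]
    rw [sumlem _ hg, hcol]
    simp [Fin.castLE_inj]
  have hArow : A * Aᴴ = 1 := mul_eq_one_comm.mp hAcol
  -- upper-right corner vanishes
  have hB : ∀ i j : Fin N, (i : ℕ) < k → k ≤ (j : ℕ) → Ω i j = 0 := by
    intro i j hi hj
    set i' : Fin k := ⟨(i : ℕ), hi⟩ with hi'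
    have hci : Fin.castLE hkN i' = i := Fin.ext rfl
    -- real sums
    set G : ℕ → ℝ := fun m => if h : m < N then Complex.normSq (Ω i ⟨m, h⟩) else 0 with hG
    have eN : (∑ m ∈ Finset.range N, G m) = 1 := by
      have hs := hrow i i
      rw [if_pos rfl] at hs
      have : (∑ j' : Fin N, Ω i j' * star (Ω i j')) =
          ((∑ m ∈ Finset.range N, G m : ℝ) : ℂ) := by
        push_cast
        rw [← Fin.sum_univ_eq_sum_range]
        apply Finset.sum_congr rfl
        intro x _
        simp only [hG, dif_pos x.isLt]
        rw [Complex.star_def, Complex.mul_conj]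
      rw [this] at hs
      exact_mod_cast hs
    have ek : (∑ m ∈ Finset.range k, G m) = 1 := by
      have hs := congrFun (congrFun hArow i') i'
      simp only [Matrix.mul_apply, Matrix.conjTranspose_apply, Matrix.one_apply,
        if_pos rfl] at hs
      simp only [hA] at hs
      have : (∑ b : Fin k, Ω (Fin.castLE hkN i') (Fin.castLE hkN b) *
          star (Ω (Fin.castLE hkN i') (Fin.castLE hkN b))) =
          ((∑ m ∈ Finset.range k, G m : ℝ) : ℂ) := by
        push_cast
        rw [← Fin.sum_univ_eq_sum_range]
        apply Finset.sum_congr rfl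
        intro x _
        have hx : (x : ℕ) < N := lt_of_lt_of_le x.isLt hkN
        simp only [hG, dif_pos hx, hci]
        rw [Complex.star_def, Complex.mul_conj]
        congr 1
      rw [this] at hs
      norm_num at hs
      exact_mod_cast hs
    have hsd : (∑ m ∈ Finset.range N \ Finset.range k, G m) = 0 := by
      have := Finset.sum_sdiff (f := G) (Finset.range_subset_range.mpr hkN)
      rw [ek, eN] at this
      linarith
    have hall : ∀ m ∈ Finset.range N \ Finset.range k, G m = 0 := by
      refine (Finset.sum_eq_zero_iff_of_nonneg ?_).mp hsd
      intro m _
      by_cases h : m < N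
      · simp [hG, h, Complex.normSq_nonneg]
      · simp [hG, h]
    have hmem : (j : ℕ) ∈ Finset.range N \ Finset.range k := by
      simp [Finset.mem_sdiff, j.isLt]
      omega
    have := hall (j : ℕ) hmem
    simp only [hG, dif_pos j.isLt] at this
    have hjj : (⟨(j : ℕ), j.isLt⟩ : Fin N) = j := Fin.ext rfl
    rw [hjj] at this
    exact Complex.normSq_eq_zero.mp this
  intro i j hij
  rcases hij with ⟨h1, h2⟩ | ⟨h1, h2⟩
  · exact hB i j h1 h2
  · exact hC i j h1 h2
end
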